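/- Let γ : ℝ → ℝ² be a C² unit-speed curve satisfying the separation bound. Then ‖γ''(s)‖ ≤ 1 for every s; that is, the curvature of the curve is everywhere at most 1. -/

import Mathlib

/-!
Since `‖γ'‖ = 1`, `γ''` is orthogonal to `γ'`, so in the plane `‖γ''‖ = |⟪n, γ''⟫|`. For
`c = γ s + σ n s`, the separation bound says that `t ↦ ‖γ t - c‖²` is minimal at `t = s`, so its
second derivative there, `2 (‖γ'‖² - ⟪c - γ s, γ''⟫) = 2 (1 - σ ⟪n, γ''⟫)`, is nonnegative.
The two signs `σ = ±1` give `|⟪n, γ''⟫| ≤ 1`.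
-/

noncomputable section

/-- Rotation by π/2 in the plane: `J (x, y) = (-y, x)`. -/
def J (v : EuclideanSpace ℝ (Fin 2)) : EuclideanSpace ℝ (Fin 2) := WithLp.toLp 2 ![-(v 1), v 0]

open Filter Topology

theorem IsLocalMin.deriv_deriv_nonneg {f : ℝ → ℝ} {a : ℝ} (h : IsLocalMin f a)
    (hc : ContinuousAt f a) : 0 ≤ deriv (deriv f) a := by
  by_contra! hneg
  have hmax : IsLocalMax f a := isLocalMax_of_deriv_deriv_neg hneg h.deriv_eq_zero hc
  have hconst : f =ᶠ[𝓝 a] fun _ => f a := (h.and hmax).mono fun _ hx => le_antisymm hx.2 hx.1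
  rw [hconst.deriv.deriv_eq] at hneg
  simp at hneg

section Curve

variable {F : Type*} [NormedAddCommGroup F] [InnerProductSpace ℝ F] {γ : ℝ → F} {s : ℝ}

theorem inner_deriv_deriv_deriv_eq_zero_of_norm_deriv_eq {r : ℝ}
    (hγ : ∀ t, ‖deriv γ t‖ = r) (hd : DifferentiableAt ℝ (deriv γ) s) : inner ℝ (deriv γ s) (deriv (deriv γ) s) = 0 := by
  have h := hd.hasDerivAt.norm_sq
  simp only [hγ] at h
  linarith [h.unique (hasDerivAt_const s (r ^ 2))]

theorem deriv_deriv_norm_sub_sq (c : F) (hγ : Differentiable ℝ γ)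
    (hd : DifferentiableAt ℝ (deriv γ) s) :
    deriv (deriv fun t => ‖γ t - c‖ ^ 2) s
      = 2 * (‖deriv γ s‖ ^ 2 + inner ℝ (γ s - c) (deriv (deriv γ) s)) := by
  have hderiv : deriv (fun t => ‖γ t - c‖ ^ 2) = fun t => 2 * inner ℝ (γ t - c) (deriv γ t) :=
    funext fun t => ((hγ t).hasDerivAt.sub_const c).norm_sq.deriv
  rw [hderiv, ((((hγ s).hasDerivAt.sub_const c).inner ℝ hd.hasDerivAt).const_mul 2).deriv,
    real_inner_self_eq_norm_sq]
  ring

theorem IsLocalMin.inner_sub_deriv_deriv_le_norm_deriv_sq {c : F}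
    (hmin : IsLocalMin (fun t => ‖γ t - c‖) s) (hγ : Differentiable ℝ γ) (hd : DifferentiableAt ℝ (deriv γ) s) :
    inner ℝ (c - γ s) (deriv (deriv γ) s) ≤ ‖deriv γ s‖ ^ 2 := by
  have hsq : IsLocalMin (fun t => ‖γ t - c‖ ^ 2) s :=
    hmin.mono fun _ ht => pow_le_pow_left₀ (norm_nonneg _) ht 2
  have hconvex := hsq.deriv_deriv_nonneg (((hγ s).continuousAt.sub continuousAt_const).norm.pow 2)
  rw [deriv_deriv_norm_sub_sq c hγ hd] at hconvex
  rw [← neg_sub, inner_neg_left]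
  linarith

end Curve

theorem norm_J (v : EuclideanSpace ℝ (Fin 2)) : ‖J v‖ = ‖v‖ := by
  rw [EuclideanSpace.norm_eq, EuclideanSpace.norm_eq]
  simp [J, Fin.sum_univ_two, add_comm]

theorem norm_eq_abs_inner_J_of_inner_eq_zero {u w : EuclideanSpace ℝ (Fin 2)} (hu : ‖u‖ = 1)
    (huw : inner ℝ u w = 0) : ‖w‖ = |inner ℝ (J u) w| := by
  have hu2 : u 0 ^ 2 + u 1 ^ 2 = 1 := by
    simpa [hu, Fin.sum_univ_two] using (EuclideanSpace.norm_sq_eq u).symm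
  rw [← abs_norm, ← sq_eq_sq_iff_abs_eq_abs, EuclideanSpace.norm_sq_eq]
  simp only [EuclideanSpace.inner_eq_star_dotProduct, dotProduct, Fin.sum_univ_two, J, Pi.star_apply,
    star_trivial, Real.norm_eq_abs, sq_abs, Matrix.cons_val_zero, Matrix.cons_val_one,
    Matrix.cons_val_fin_one] at huw ⊢
  linear_combination -(w 0 ^ 2 + w 1 ^ 2) * hu2 + (w 0 * u 0 + w 1 * u 1) * huw

/-- **Curvature bound** (Observation 2.6 (2)).  A C² unit-speed plane curve satisfying
the separation bound has curvature at most `1` everywhere: `‖γ'' s‖ ≤ 1`. -/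
theorem curvature_le_one_of_separation
    (γ : ℝ → EuclideanSpace ℝ (Fin 2))
    (hC2 : ContDiff ℝ 2 γ)
    (hunit : ∀ s, ‖deriv γ s‖ = 1)
    (hsep : ∀ s t : ℝ, ∀ σ : ℝ, (σ = 1 ∨ σ = -1) →
      1 ≤ ‖γ t - (γ s + σ • J (deriv γ s))‖) :
    ∀ s : ℝ, ‖deriv (deriv γ) s‖ ≤ 1 := by
  intro s
  have hγ : Differentiable ℝ γ := hC2.differentiable (by norm_num)
  have hd : DifferentiableAt ℝ (deriv γ) s := hC2.differentiable_deriv_two s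
  have hbound : ∀ σ : ℝ, (σ = 1 ∨ σ = -1) →
      σ * inner ℝ (J (deriv γ s)) (deriv (deriv γ) s) ≤ 1 := by
    intro σ hσ
    have hσ1 : |σ| = 1 := by rcases hσ with rfl | rfl <;> norm_num
    have hmin : IsLocalMin (fun t => ‖γ t - (γ s + σ • J (deriv γ s))‖) s :=
      IsMinOn.isLocalMin (fun t _ => by simpa [norm_smul, norm_J, hσ1, hunit] using hsep s t σ hσ)
        Filter.univ_mem
    simpa [inner_smul_left, hunit] using hmin.inner_sub_deriv_deriv_le_norm_deriv_sq hγ hd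
  have horth := inner_deriv_deriv_deriv_eq_zero_of_norm_deriv_eq hunit hd
  rw [norm_eq_abs_inner_J_of_inner_eq_zero (hunit s) horth, abs_le]
  exact ⟨by linarith [hbound (-1) (Or.inr rfl)], by linarith [hbound 1 (Or.inl rfl)]⟩

end
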